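/- arXiv:1605.02859 — 2 statements merged into one kernel-verified Lean document; each statement's English description precedes it below -/
import Mathlib

section
/- Let λ be a partition of n and let w = s_{i_1}⋯s_{i_k} be a reduced expression with 1 ≤ i_1 < ⋯ < i_k < n. For a standard λ-tableau t, let γ_t(w) be the coefficient of v_{t'} in v_t T_w. Then γ_t(w) = γ_t(i_1)⋯γ_t(i_k) if t is w-transposable, and γ_t(w) = 0 otherwise; here for a w-transposable tableau t, γ_t(i_j) = −1/[ρ_j] if i_j lies on the diagonal of t, γ_t(i_j) = −1/[ρ'_j] if c_t(i_j) = −c_t(i_j − 1), and γ_t(i_j) = α_{ρ_j} if c_t(i_j) = −c_t(i_j + 1), where ρ_j = c_t(i_j) − c_t(i_j + 1) and ρ'_j = c_t(i_j − 1) − c_t(i_j + 1). -/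
open scoped Classical

noncomputable section

/-- The simple transposition swapping `i` and `i+1` (0-indexed; this is the Coxeter
generator `s_{i+1}` in 1-indexed notation) in the symmetric group on `Fin n`. -/
def sTr (n i : ℕ) : Equiv.Perm (Fin n) :=
  if h : i + 1 < n then Equiv.swap ⟨i, Nat.lt_of_succ_lt h⟩ ⟨i + 1, h⟩ else 1

/-- The Coxeter length: the minimal length of an expression of `w` as a product of
simple transpositions. -/
def len (n : ℕ) (w : Equiv.Perm (Fin n)) : ℕ :=
  sInf {k | ∃ l : List ℕ, l.length = k ∧ (∀ i ∈ l, i + 1 < n) ∧ w = (l.map (sTr n)).prod}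

/-- The (strict) Bruhat order on the symmetric group: `y < z` iff `z` can be obtained
from `y` by successively multiplying by reflections, increasing the length at each step. -/
def bruhatLT (n : ℕ) (y z : Equiv.Perm (Fin n)) : Prop :=
  Relation.TransGen
    (fun a b => (∃ u v : Fin n, u ≠ v ∧ b = a * Equiv.swap u v) ∧ len n a < len n b) y z

/-- `y ≺ z` iff `y < z` in the Bruhat order and `ℓ(y) ≢ ℓ(z) (mod 2)`. -/
def precLT (n : ℕ) (y z : Equiv.Perm (Fin n)) : Prop :=
  bruhatLT n y z ∧ ¬ (len n y % 2 = len n z % 2)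

/-- The element `A_z = ½(T_z + ε_z T_z^#)`. -/
def Aelt {R H : Type*} [CommRing R] [Ring H] [Algebra R H] (n : ℕ)
    (T : Equiv.Perm (Fin n) → H) (hash : H ≃ₐ[R] H) (z : Equiv.Perm (Fin n)) : H :=
  Ring.inverse (2 : R) • (T z + ((-1 : R) ^ len n z) • hash (T z))

/-- The `ε`-eigenspace `H^ε = {h ∈ H : h^# = ε h}` of an algebra automorphism,
viewed as an `R`-submodule. -/
def fixedSubmodule {R H : Type*} [CommRing R] [Ring H] [Algebra R H]
    (φ : H ≃ₐ[R] H) (ε : R) : Submodule R H where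
  carrier := {x | φ x = ε • x}
  add_mem' := by
    intro a b ha hb
    simp only [Set.mem_setOf_eq] at *
    rw [map_add, ha, hb, smul_add]
  zero_mem' := by simp
  smul_mem' := by
    intro c a ha
    simp only [Set.mem_setOf_eq] at *
    rw [map_smul, ha, smul_smul, smul_smul, mul_comm]

/-- The quantum integer `[k] = q + q³ + ⋯ + q^{2k−1}` for `k ≥ 0`, and
`[k] = −q⁻¹ − q⁻³ − ⋯ − q^{2k+1}` for `k < 0`. -/
def qint {F : Type*} [Field F] (q : F) : ℤ → F
  | Int.ofNat k => ∑ j ∈ Finset.range k, q ^ (2 * j + 1)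
  | Int.negSucc k => -∑ j ∈ Finset.range (k + 1), (q ^ (2 * j + 1))⁻¹

/-- The coefficients `α_k = √(−1)·√([k+1])·√([k−1])/[k]` for `k > 0`, with
`α_{−k} = −α_k` (and `α_0 = 0`). -/
def alph {F : Type*} [Field F] (q sqm1 : F) (sq : ℕ → F) (m : ℤ) : F :=
  if 0 ≤ m then sqm1 * sq (m.toNat + 1) * sq (m.toNat - 1) / qint q m
  else -(sqm1 * sq ((-m).toNat + 1) * sq ((-m).toNat - 1) / qint q (-m))

/-- A standard `μ`-tableau, recorded by the positions of its entries: `pos k` is the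
cell containing the entry `k+1`.  Standardness means the entries are distinct cells
of `μ` and `t(r,c) < t(s,d)` whenever `(r,c) ≠ (s,d)`, `r ≤ s` and `c ≤ d`. -/
def IsStdTab (μ : YoungDiagram) {n : ℕ} (pos : Fin n → ℕ × ℕ) : Prop :=
  Function.Injective pos ∧ (∀ k, pos k ∈ μ) ∧
    ∀ j k : Fin n, (pos j).1 ≤ (pos k).1 → (pos j).2 ≤ (pos k).2 → pos j ≠ pos k → j < k

/-- The type of standard `μ`-tableaux with `n` entries. -/
def StdTab (μ : YoungDiagram) (n : ℕ) : Type :=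
  {pos : Fin n → ℕ × ℕ // IsStdTab μ pos}

/-- The content `c_t(m+1) = c − r` of the entry `m+1`, located in cell `(r, c)`
(and junk value `0` when `m ≥ n`). -/
def contN {n : ℕ} (pos : Fin n → ℕ × ℕ) (m : ℕ) : ℤ :=
  if h : m < n then ((pos ⟨m, h⟩).2 : ℤ) - ((pos ⟨m, h⟩).1 : ℤ) else 0

/-- The axial distance `ρ_t(i+1) = c_t(i+1) − c_t(i+2)` (0-indexed `i`). -/
def rhoAx {n : ℕ} (pos : Fin n → ℕ × ℕ) (i : ℕ) (hi : i + 1 < n) : ℤ :=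
  (((pos ⟨i, Nat.lt_of_succ_lt hi⟩).2 : ℤ) - ((pos ⟨i, Nat.lt_of_succ_lt hi⟩).1 : ℤ))
    - (((pos ⟨i + 1, hi⟩).2 : ℤ) - ((pos ⟨i + 1, hi⟩).1 : ℤ))

/-- The tableau `t·s_{i+1}`, obtained from `t` by swapping the entries `i+1`, `i+2`. -/
def swapEnt {n : ℕ} (pos : Fin n → ℕ × ℕ) (i : ℕ) (hi : i + 1 < n) : Fin n → ℕ × ℕ :=
  pos ∘ (Equiv.swap ⟨i, Nat.lt_of_succ_lt hi⟩ ⟨i + 1, hi⟩)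

/-- The conjugate of a tableau: the entry in cell `(r,c)` moves to cell `(c,r)`. -/
def conjPos {n : ℕ} (pos : Fin n → ℕ × ℕ) : Fin n → ℕ × ℕ :=
  fun k => ((pos k).2, (pos k).1)

lemma isStdTab_conj {μ : YoungDiagram} {n : ℕ} {pos : Fin n → ℕ × ℕ}
    (h : IsStdTab μ pos) : IsStdTab μ.transpose (conjPos pos) := by
  obtain ⟨hinj, hmem, hord⟩ := h
  refine ⟨?_, ?_, ?_⟩
  · intro a b hab
    apply hinj
    have h1 : ((pos a).2, (pos a).1) = ((pos b).2, (pos b).1) := hab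
    have h2 := congrArg Prod.snd h1
    have h3 := congrArg Prod.fst h1
    simp only at h2 h3
    exact Prod.ext h2 h3
  · intro k
    rw [YoungDiagram.mem_transpose]
    exact hmem k
  · intro j k h1 h2 hne
    refine hord j k h2 h1 ?_
    intro hc
    exact hne (by rw [conjPos, conjPos, hc])

/-- The conjugate standard tableau `t' ∈ Std(μ')` of `t ∈ Std(μ)`. -/
def conjTab {μ : YoungDiagram} {n : ℕ} (t : StdTab μ n) : StdTab μ.transpose n :=
  ⟨conjPos t.val, isStdTab_conj t.prop⟩

/-- The conjugate standard tableau, going from `Std(μ')` back to `Std(μ)`. -/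
def backConjTab {μ : YoungDiagram} {n : ℕ} (s : StdTab μ.transpose n) : StdTab μ n :=
  ⟨conjPos s.val, by
    have h := isStdTab_conj s.prop
    rwa [YoungDiagram.transpose_transpose] at h⟩

/-- The linear map `τ : S(μ') → S(μ)` with `v_s ↦ v_{s'}`. -/
def crossTau (F : Type*) [Field F] (μ : YoungDiagram) (n : ℕ) :
    (StdTab μ.transpose n → F) →ₗ[F] (StdTab μ n → F) where
  toFun f := fun t => f (conjTab t)
  map_add' _ _ := rfl
  map_smul' _ _ := rfl

/-- The linear map `τ : S(μ) → S(μ')` with `v_t ↦ v_{t'}`. -/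
def fwdTau (F : Type*) [Field F] (μ : YoungDiagram) (n : ℕ) :
    (StdTab μ n → F) →ₗ[F] (StdTab μ.transpose n → F) where
  toFun f := fun s => f (backConjTab s)
  map_add' _ _ := rfl
  map_smul' _ _ := rfl

/-- For a self-conjugate shape, the conjugate tableau `t'` of `t`, as a standard
tableau of the same shape. -/
def selfConjTab {μ : YoungDiagram} (hself : μ.transpose = μ) {n : ℕ}
    (t : StdTab μ n) : StdTab μ n :=
  ⟨conjPos t.val, by have h := isStdTab_conj t.prop; rwa [hself] at h⟩

/-- For a self-conjugate shape, the linear involution `τ` of `S(μ)` with `v_t ↦ v_{t'}`. -/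
def selfTau {F : Type*} [Field F] {μ : YoungDiagram} (hself : μ.transpose = μ) (n : ℕ) :
    (StdTab μ n → F) →ₗ[F] (StdTab μ n → F) where
  toFun f := fun t => f (selfConjTab hself t)
  map_add' _ _ := rfl
  map_smul' _ _ := rfl

/-- `act` is the (right) seminormal representation of the Hecke algebra on the Specht
module `S(μ)`, with basis `{v_t}` indexed by the standard `μ`-tableaux, on which the
generators act by `v_t T_i = (−1/[ρ_t(i)]) v_t + α_t(i) v_{t·s_i}`. -/
def SpechtRep {F : Type*} [Field F] (q sqm1 : F) (sq : ℕ → F) (n : ℕ)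
    {H : Type*} [Ring H] [Algebra F H] (T : Equiv.Perm (Fin n) → H)
    (μ : YoungDiagram) (act : H →ₗ[F] Module.End F (StdTab μ n → F)) : Prop :=
  act 1 = 1 ∧ (∀ a b : H, act (a * b) = act b * act a) ∧
    ∀ (i : ℕ) (hi : i + 1 < n) (t : StdTab μ n),
      act (T (sTr n i)) (Pi.single t (1 : F) : StdTab μ n → F) =
        (-(qint q (rhoAx t.val i hi))⁻¹) • (Pi.single t (1 : F) : StdTab μ n → F) +
          (if h : IsStdTab μ (swapEnt t.val i hi) then
            alph q sqm1 sq (rhoAx t.val i hi) •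
              (Pi.single (⟨swapEnt t.val i hi, h⟩ : StdTab μ n) (1 : F) : StdTab μ n → F)
           else 0)


/-- Entry `m+1` lies on the diagonal of the tableau. -/
def onDiag {n : ℕ} (pos : Fin n → ℕ × ℕ) (m : ℕ) : Prop :=
  ∃ h : m < n, (pos ⟨m, h⟩).1 = (pos ⟨m, h⟩).2

/-- `t` is `w`-transposable: whenever entries `i` and `j` occupy diagonally opposite
cells of `t` then `j ∈ {i − 1, i + 1}` and `i`, `j` lie in the same cycle of `w`.
(Entries are 0-indexed here: index `k` is the entry `k+1`.) -/
def IsTransposable {n : ℕ} (w : Equiv.Perm (Fin n)) (pos : Fin n → ℕ × ℕ) : Prop :=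
  ∀ j k : Fin n, (pos j).1 ≠ (pos j).2 → pos k = ((pos j).2, (pos j).1) →
    ((k : ℕ) = (j : ℕ) + 1 ∨ (j : ℕ) = (k : ℕ) + 1) ∧ w.SameCycle j k

/-- The factor `γ_t(i_j)` of Definition `gamma` (0-indexed: `gam … pos u = γ_t(u+1)`):
`γ_t(i_j) = −1/[ρ_j]` if `i_j` is on the diagonal of `t`; `γ_t(i_j) = −1/[ρ'_j]` if
`c_t(i_j) = −c_t(i_j − 1)`; and `γ_t(i_j) = α_{ρ_j}` if `c_t(i_j) = −c_t(i_j + 1)`,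
where `ρ_j = c_t(i_j) − c_t(i_j+1)` and `ρ'_j = c_t(i_j−1) − c_t(i_j+1)`. -/
def gam {F : Type*} [Field F] (q sqm1 : F) (sq : ℕ → F) {n : ℕ}
    (pos : Fin n → ℕ × ℕ) (u : ℕ) : F :=
  if onDiag pos u then -(qint q (contN pos u - contN pos (u + 1)))⁻¹
  else if contN pos u = -(contN pos (u - 1)) then
    -(qint q (contN pos (u - 1) - contN pos (u + 1)))⁻¹
  else alph q sqm1 sq (contN pos u - contN pos (u + 1))

/-!
Expand `v_t T_{i₁} ⋯ T_{i_k}` letter by letter in the seminormal basis: each `T_i` either keeps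
the tableau or swaps its entries `i` and `i + 1`. As the letters increase, no entry moves down by
more than one place, and the entry `i` never moves after the letter `i`. So `v_{t'}` can only be
reached if diagonally opposite entries are adjacent and the smaller one is a letter of `w`, which
is `w`-transposability; and then only along one path, which swaps exactly the diagonal pairs and
keeps every other entry, picking up the factors `γ_t(i_j)`.
-/

def cellContent (c : ℕ × ℕ) : ℤ := (c.2 : ℤ) - c.1

lemma cellContent_swap (c : ℕ × ℕ) : cellContent (c.2, c.1) = -cellContent c := by
  simp only [cellContent]; ring

lemma contN_eq_cellContent {n : ℕ} (pos : Fin n → ℕ × ℕ) {m : ℕ} (hm : m < n) :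
    contN pos m = cellContent (pos ⟨m, hm⟩) := dif_pos hm

lemma rhoAx_eq_cellContent {n : ℕ} (pos : Fin n → ℕ × ℕ) {i : ℕ} (hi : i + 1 < n) :
    rhoAx pos i hi = cellContent (pos ⟨i, by omega⟩) - cellContent (pos ⟨i + 1, hi⟩) := rfl

namespace IsStdTab

variable {μ : YoungDiagram} {n : ℕ} {pos : Fin n → ℕ × ℕ}

lemma exists_apply_eq (h : IsStdTab μ pos) (hμ : μ.card = n) {c : ℕ × ℕ} (hc : c ∈ μ) :
    ∃ k, pos k = c := by
  have hsub : Finset.univ.image pos ⊆ μ.cells := by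
    intro x hx
    obtain ⟨k, -, rfl⟩ := Finset.mem_image.1 hx
    exact (YoungDiagram.mem_cells _).2 (h.2.1 k)
  have himage : Finset.univ.image pos = μ.cells :=
    Finset.eq_of_subset_of_card_le hsub (by simp [Finset.card_image_of_injective _ h.1, hμ])
  have hc' : c ∈ Finset.univ.image pos := himage ▸ (YoungDiagram.mem_cells _).2 hc
  simpa using hc'

/-- Two cells of equal content, the second strictly below the first, enclose the two distinct
cells `(r, c + 1)` and `(r + 1, c)`; so their entries differ by at least three. -/
lemma cellContent_ne_of_add_two (h : IsStdTab μ pos) (hμ : μ.card = n) {a b : Fin n}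
    (hab : (a : ℕ) + 2 = b) : cellContent (pos a) ≠ cellContent (pos b) := by
  intro hc
  obtain ⟨hinj, hmem, hord⟩ := h
  unfold cellContent at hc
  have hne : pos a ≠ pos b := fun he => by have := hinj he; omega
  have hrow : (pos a).1 < (pos b).1 := by
    by_contra! hle
    have := hord b a hle (by omega) hne.symm
    rw [Fin.lt_def] at this; omega
  obtain ⟨x, hx⟩ := exists_apply_eq ⟨hinj, hmem, hord⟩ hμ
    (μ.up_left_mem (j1 := (pos a).2 + 1) hrow.le (by omega) (hmem b))
  obtain ⟨y, hy⟩ := exists_apply_eq ⟨hinj, hmem, hord⟩ hμ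
    (μ.up_left_mem (i1 := (pos a).1 + 1) (j1 := (pos a).2) hrow (by omega) (hmem b))
  have hax := hord a x (by simp [hx]) (by simp [hx]) (by simp [hx, Prod.ext_iff])
  have hxb := hord x b (by simp [hx]; omega) (by simp [hx]; omega)
    (by simp [hx, Prod.ext_iff]; omega)
  have hay := hord a y (by simp [hy]) (by simp [hy]) (by simp [hy, Prod.ext_iff])
  have hyb := hord y b (by simp [hy]; omega) (by simp [hy]; omega)
    (by simp [hy, Prod.ext_iff]; omega)
  rw [Fin.lt_def] at hax hxb hay hyb
  have hxy : x = y := Fin.ext (by omega)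
  rw [hxy, hy] at hx
  simp [Prod.ext_iff] at hx

lemma swapEnt (h : IsStdTab μ pos) {i : ℕ} (hi : i + 1 < n)
    (hinc : ¬((pos ⟨i, by omega⟩).1 ≤ (pos ⟨i + 1, hi⟩).1 ∧
        (pos ⟨i, by omega⟩).2 ≤ (pos ⟨i + 1, hi⟩).2)) :
    IsStdTab μ (swapEnt pos i hi) := by
  refine ⟨h.1.comp (Equiv.swap _ _).injective, fun k => h.2.1 _, fun a b hr hc hne => ?_⟩
  have hlt := h.2.2 _ _ hr hc hne
  by_cases hba : (a : ℕ) = i + 1 ∧ (b : ℕ) = i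
  · obtain ⟨rfl, rfl⟩ : a = ⟨i + 1, hi⟩ ∧ b = ⟨i, Nat.lt_of_succ_lt hi⟩ :=
      ⟨Fin.ext hba.1, Fin.ext hba.2⟩
    simp only [_root_.swapEnt, Function.comp_apply, Equiv.swap_apply_left,
      Equiv.swap_apply_right] at hr hc
    exact absurd ⟨hr, hc⟩ hinc
  · rw [Equiv.swap_apply_def, Equiv.swap_apply_def] at hlt
    simp only [Fin.lt_def, Fin.ext_iff] at hlt ⊢
    split_ifs at hlt <;> simp_all <;> omega

end IsStdTab

section SimpleTranspositions

variable {n : ℕ}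

lemma sTr_eq_swap {i : ℕ} (hi : i + 1 < n) :
    sTr n i = Equiv.swap ⟨i, Nat.lt_of_succ_lt hi⟩ ⟨i + 1, hi⟩ := dif_pos hi

lemma swapEnt_eq_comp {pos : Fin n → ℕ × ℕ} {i : ℕ} (hi : i + 1 < n) :
    swapEnt pos i hi = pos ∘ sTr n i := by
  rw [sTr_eq_swap hi, swapEnt]

lemma sTr_apply_of_lt {i : ℕ} {x : Fin n} (hx : (x : ℕ) < i) : sTr n i x = x := by
  unfold sTr
  split_ifs
  · exact Equiv.swap_apply_of_ne_of_ne (by simp [Fin.ext_iff]; omega)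
      (by simp [Fin.ext_iff]; omega)
  · rfl

lemma sTr_mapsTo_le {i j : ℕ} (hij : i ≠ j) :
    Set.MapsTo (sTr n i) {x | (x : ℕ) ≤ j} {x | (x : ℕ) ≤ j} := by
  intro x (hx : (x : ℕ) ≤ j)
  show ((sTr n i x : Fin n) : ℕ) ≤ j
  unfold sTr
  split_ifs
  · rw [Equiv.swap_apply_def]
    split_ifs <;> simp_all [Fin.ext_iff] <;> omega
  · exact hx

lemma prod_sTr_apply_of_lt {l : List ℕ} {x : Fin n} (hx : ∀ i ∈ l, (x : ℕ) < i) :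
    (l.map (sTr n)).prod x = x := by
  induction l with
  | nil => rfl
  | cons i r ih =>
    simp only [List.forall_mem_cons] at hx
    rw [List.map_cons, List.prod_cons, Equiv.Perm.mul_apply, ih hx.2, sTr_apply_of_lt hx.1]

lemma prod_sTr_mapsTo_le {l : List ℕ} {j : ℕ} (hj : j ∉ l) :
    Set.MapsTo ((l.map (sTr n)).prod) {x | (x : ℕ) ≤ j} {x | (x : ℕ) ≤ j} := by
  induction l with
  | nil => exact Set.mapsTo_id _
  | cons i r ih =>
    simp only [List.mem_cons, not_or] at hj
    rw [List.map_cons, List.prod_cons, Equiv.Perm.coe_mul]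
    exact (sTr_mapsTo_le (Ne.symm hj.1)).comp (ih hj.2)

/-- Along an increasing word, `j` is first fixed by the larger letters, then moved by `s_j`,
and then fixed by the smaller letters. -/
lemma val_prod_sTr_apply_of_mem {l : List ℕ} (hl : l.Pairwise (· < ·))
    (hval : ∀ i ∈ l, i + 1 < n) {x : Fin n} (hx : (x : ℕ) ∈ l) :
    (((l.map (sTr n)).prod x : Fin n) : ℕ) = x + 1 := by
  induction l with
  | nil => cases hx
  | cons i r ih =>
    rw [List.pairwise_cons] at hl
    have hi := hval i (by simp)
    rw [List.map_cons, List.prod_cons, Equiv.Perm.mul_apply]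
    rcases List.mem_cons.1 hx with hxi | hxr
    · rw [prod_sTr_apply_of_lt (hxi ▸ hl.1), sTr_eq_swap hi, Equiv.swap_apply_def, if_pos]
      exacts [by simp [hxi], Fin.ext hxi]
    · have hix := hl.1 x hxr
      have hrx := ih hl.2 (fun j hj => hval j (by simp [hj])) hxr
      rw [sTr_eq_swap hi, Equiv.swap_apply_def]
      split_ifs <;> simp only [Fin.ext_iff] at * <;> omega

lemma sameCycle_prod_sTr_of_mem {l : List ℕ} (hl : l.Pairwise (· < ·))
    (hval : ∀ i ∈ l, i + 1 < n) {x y : Fin n} (hx : (x : ℕ) ∈ l) (hxy : (y : ℕ) = x + 1) :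
    ((l.map (sTr n)).prod).SameCycle x y := by
  have hy : (l.map (sTr n)).prod x = y :=
    Fin.ext ((val_prod_sTr_apply_of_mem hl hval hx).trans hxy.symm)
  exact hy ▸ Equiv.Perm.sameCycle_apply_right.2 (Equiv.Perm.SameCycle.refl _ _)

lemma not_sameCycle_prod_sTr {l : List ℕ} {j : ℕ} (hj : j ∉ l) (hjn : j + 1 < n) :
    ¬((l.map (sTr n)).prod).SameCycle ⟨j, Nat.lt_of_succ_lt hjn⟩ ⟨j + 1, hjn⟩ := by
  intro hcyc
  obtain ⟨k, hk⟩ := hcyc.exists_nat_pow_eq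
  have hle := (prod_sTr_mapsTo_le (n := n) hj).iterate k
    (x := ⟨j, Nat.lt_of_succ_lt hjn⟩) (by simp)
  rw [← Equiv.Perm.coe_pow, hk] at hle
  exact absurd hle (by simp)

end SimpleTranspositions

section Length

variable {n : ℕ}

lemma len_prod_le {l : List ℕ} (hl : ∀ i ∈ l, i + 1 < n) :
    len n (l.map (sTr n)).prod ≤ l.length :=
  Nat.sInf_le ⟨l, rfl, hl, rfl⟩

lemma len_mul_sTr_le {l : List ℕ} (hl : ∀ i ∈ l, i + 1 < n) {i : ℕ} (hi : i + 1 < n) :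
    len n ((l.map (sTr n)).prod * sTr n i) ≤ len n (l.map (sTr n)).prod + 1 := by
  obtain ⟨m, hm, hmn, hmeq⟩ := Nat.sInf_mem (⟨l.length, l, rfl, hl, rfl⟩ :
    {k | ∃ m : List ℕ, m.length = k ∧ (∀ i ∈ m, i + 1 < n) ∧
      (l.map (sTr n)).prod = (m.map (sTr n)).prod}.Nonempty)
  have hprod : (l.map (sTr n)).prod * sTr n i = ((m ++ [i]).map (sTr n)).prod := by
    simp [hmeq]
  have hm' : m.length = len n (l.map (sTr n)).prod := hm
  rw [hprod, ← hm']
  refine (len_prod_le ?_).trans (by simp)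
  simpa [or_imp, forall_and] using ⟨hmn, hi⟩

lemma T_prod_of_reduced {H : Type*} [Ring H] (T : Equiv.Perm (Fin n) → H) (hT1 : T 1 = 1)
    (hmul : ∀ (w : Equiv.Perm (Fin n)) (i : ℕ), i + 1 < n →
      len n (w * sTr n i) = len n w + 1 → T w * T (sTr n i) = T (w * sTr n i))
    {l : List ℕ} (hl : ∀ i ∈ l, i + 1 < n) (hred : len n (l.map (sTr n)).prod = l.length) :
    T (l.map (sTr n)).prod = (l.map (fun i => T (sTr n i))).prod := by
  induction l using List.reverseRecOn with
  | nil => simpa using hT1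
  | append_singleton l i ih =>
    have hl' : ∀ j ∈ l, j + 1 < n := fun j hj => hl j (by simp [hj])
    have hi : i + 1 < n := hl i (by simp)
    have hsplit : ((l ++ [i]).map (sTr n)).prod = (l.map (sTr n)).prod * sTr n i := by simp
    have hle := len_prod_le hl'
    have hstep := len_mul_sTr_le hl' hi
    rw [hsplit, List.length_append, List.length_singleton] at hred
    rw [hsplit, ← hmul _ i hi (by omega), ih hl' (by omega)]
    simp

end Length

section WordCoeff

variable {F : Type*} [Field F] (q sqm1 : F) (sq : ℕ → F) {μ : YoungDiagram} {n : ℕ}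

/-- The coefficient of `v_u` in `v_s T_{l₁} ⋯ T_{l_k}`. -/
def wordCoeff (u : StdTab μ n) : List ℕ → StdTab μ n → F
  | [], s => if s = u then 1 else 0
  | i :: r, s =>
    if hi : i + 1 < n then
      -(qint q (rhoAx s.val i hi))⁻¹ * wordCoeff u r s +
        (if h : IsStdTab μ (swapEnt s.val i hi) then
          alph q sqm1 sq (rhoAx s.val i hi) * wordCoeff u r ⟨swapEnt s.val i hi, h⟩ else 0)
    else 0

lemma SpechtRep.act_prod_single_apply {H : Type*} [Ring H] [Algebra F H]
    {T : Equiv.Perm (Fin n) → H} {act : H →ₗ[F] Module.End F (StdTab μ n → F)}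
    (hact : SpechtRep q sqm1 sq n T μ act) {l : List ℕ} (hl : ∀ i ∈ l, i + 1 < n)
    (s u : StdTab μ n) :
    act (l.map (fun i => T (sTr n i))).prod (Pi.single s 1) u = wordCoeff q sqm1 sq u l s := by
  induction l generalizing s with
  | nil =>
    rw [List.map_nil, List.prod_nil, hact.1, Module.End.one_apply, Pi.single_apply, wordCoeff]
    simp only [eq_comm]
  | cons i r ih =>
    have hi := hl i (by simp)
    have hr : ∀ j ∈ r, j + 1 < n := fun j hj => hl j (by simp [hj])
    rw [List.map_cons, List.prod_cons, hact.2.1, Module.End.mul_apply, hact.2.2 i hi s,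
      wordCoeff, dif_pos hi, map_add, map_smul, Pi.add_apply, Pi.smul_apply, smul_eq_mul,
      ih hr s]
    split_ifs with hstd
    · rw [map_smul, Pi.smul_apply, smul_eq_mul,
        ih hr (⟨swapEnt s.val i hi, hstd⟩ : StdTab μ n)]
    · rw [map_zero, Pi.zero_apply]

lemma exists_sublist_of_wordCoeff_ne_zero {u : StdTab μ n} {l : List ℕ} {s : StdTab μ n}
    (h : wordCoeff q sqm1 sq u l s ≠ 0) :
    ∃ l' : List ℕ, l'.Sublist l ∧ u.val = s.val ∘ (l'.map (sTr n)).prod := by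
  induction l generalizing s with
  | nil =>
    have hsu : s = u := by
      by_contra hne
      simp [wordCoeff, hne] at h
    exact ⟨[], List.Sublist.slnil, by simp [hsu]⟩
  | cons i r ih =>
    rw [wordCoeff] at h
    split_ifs at h with hi hstd
    · by_cases hstay : wordCoeff q sqm1 sq u r s = 0
      · rw [hstay, mul_zero, zero_add] at h
        obtain ⟨l', hsub, hu⟩ := ih (right_ne_zero_of_mul h)
        refine ⟨i :: l', hsub.cons_cons i, hu.trans ?_⟩
        show swapEnt s.val i hi ∘ _ = _
        rw [swapEnt_eq_comp hi, List.map_cons, List.prod_cons, Equiv.Perm.coe_mul]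
        rfl
      · obtain ⟨l', hsub, hu⟩ := ih hstay
        exact ⟨l', hsub.cons i, hu⟩
    · obtain ⟨l', hsub, hu⟩ := ih (right_ne_zero_of_mul (by simpa using h))
      exact ⟨l', hsub.cons i, hu⟩
    · exact absurd rfl h

lemma apply_eq_of_wordCoeff_ne_zero {u : StdTab μ n} {l : List ℕ} {s : StdTab μ n}
    (h : wordCoeff q sqm1 sq u l s ≠ 0) {k : Fin n} (hk : ∀ i ∈ l, (k : ℕ) < i) :
    s.val k = u.val k := by
  obtain ⟨l', hsub, hu⟩ := exists_sublist_of_wordCoeff_ne_zero q sqm1 sq h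
  rw [hu, Function.comp_apply, prod_sTr_apply_of_lt fun i hi => hk i (hsub.subset hi)]

/-- If `v_{t'}` occurs in `v_t T_{i₁} ⋯ T_{i_k}`, then `t' = t ∘ P` for the product `P` of a
subword; since `P a ≤ a + 1`, with equality only if `a` is a letter, diagonally opposite entries
are adjacent and the smaller one is a letter of the word. -/
lemma isTransposable_of_wordCoeff_ne_zero {t u : StdTab μ n} (hu : u.val = conjPos t.val)
    {l : List ℕ} (hl : l.Pairwise (· < ·)) (hval : ∀ i ∈ l, i + 1 < n)
    (h : wordCoeff q sqm1 sq u l t ≠ 0) : IsTransposable (l.map (sTr n)).prod t.val := by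
  intro j k hoff hk
  obtain ⟨l', hsub, hul⟩ := exists_sublist_of_wordCoeff_ne_zero q sqm1 sq h
  have hl' := hl.sublist hsub
  have hval' : ∀ i ∈ l', i + 1 < n := fun i hi => hval i (hsub.subset hi)
  have hopp : ∀ a b : Fin n, t.val b = conjPos t.val a → b = (l'.map (sTr n)).prod a :=
    fun a b hab => t.prop.1 (hab.trans (congrFun (hu.symm.trans hul) a))
  have hkj := hopp j k hk
  have hjk := hopp k j (by simp [conjPos, hk])
  have hjk_ne : (j : ℕ) ≠ k := fun he => hoff (by
    rw [Fin.ext he] at hk ⊢; exact congrArg Prod.fst hk)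
  have hle : ∀ a : Fin n, (a : ℕ) ∉ l' → (((l'.map (sTr n)).prod a : Fin n) : ℕ) ≤ a :=
    fun a ha => prod_sTr_mapsTo_le ha (x := a) (by simp)
  by_cases hj : (j : ℕ) ∈ l'
  · have hk1 : (k : ℕ) = j + 1 := by rw [hkj, val_prod_sTr_apply_of_mem hl' hval' hj]
    exact ⟨Or.inl hk1, sameCycle_prod_sTr_of_mem hl hval (hsub.subset hj) hk1⟩
  · by_cases hk' : (k : ℕ) ∈ l'
    · have hj1 : (j : ℕ) = k + 1 := by rw [hjk, val_prod_sTr_apply_of_mem hl' hval' hk']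
      exact ⟨Or.inr hj1, (sameCycle_prod_sTr_of_mem hl hval (hsub.subset hk') hj1).symm⟩
    · have h1 := hle j hj
      have h2 := hle k hk'
      rw [← hkj] at h1
      rw [← hjk] at h2
      omega

variable {u s : StdTab μ n} {i : ℕ} {r : List ℕ}

lemma wordCoeff_cons_of_apply_eq (hi : i + 1 < n) (hr : ∀ j ∈ r, i < j)
    (hs : s.val ⟨i, by omega⟩ = u.val ⟨i, by omega⟩) :
    wordCoeff q sqm1 sq u (i :: r) s =
      -(qint q (rhoAx s.val i hi))⁻¹ * wordCoeff q sqm1 sq u r s := by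
  rw [wordCoeff, dif_pos hi, add_eq_left, dite_eq_right_iff]
  intro hstd
  refine mul_eq_zero_of_right _ (by_contra fun h => ?_)
  have hfix := apply_eq_of_wordCoeff_ne_zero q sqm1 sq h (k := ⟨i, by omega⟩) hr
  rw [← hs] at hfix
  have := s.prop.1 hfix
  simp at this

lemma wordCoeff_cons_of_apply_succ_eq (hi : i + 1 < n) (hr : ∀ j ∈ r, i < j)
    (hs : s.val ⟨i + 1, hi⟩ = u.val ⟨i, by omega⟩) (hstd : IsStdTab μ (swapEnt s.val i hi)) :
    wordCoeff q sqm1 sq u (i :: r) s =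
      alph q sqm1 sq (rhoAx s.val i hi) * wordCoeff q sqm1 sq u r ⟨swapEnt s.val i hi, hstd⟩ := by
  rw [wordCoeff, dif_pos hi, dif_pos hstd, add_eq_right]
  refine mul_eq_zero_of_right _ (by_contra fun h => ?_)
  have hfix := apply_eq_of_wordCoeff_ne_zero q sqm1 sq h (k := ⟨i, by omega⟩) hr
  rw [← hs] at hfix
  have := s.prop.1 hfix
  simp at this

end WordCoeff

section DiagPairs

variable {n : ℕ} {pos : Fin n → ℕ × ℕ}

/-- The entries with (0-based) indices `j` and `j + 1` lie in diagonally opposite cells. -/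
def IsDiagPair (pos : Fin n → ℕ × ℕ) (j : ℕ) : Prop :=
  ∃ hj : j + 1 < n, pos ⟨j + 1, hj⟩ = conjPos pos ⟨j, Nat.lt_of_succ_lt hj⟩

lemma IsDiagPair.not_onDiag (hinj : Function.Injective pos) {j : ℕ} (hd : IsDiagPair pos j) :
    ¬onDiag pos j := by
  obtain ⟨hj, hpair⟩ := hd
  intro hon
  obtain ⟨_, hdiag⟩ := hon
  have := hinj (hpair.trans (Prod.ext hdiag.symm hdiag))
  simp at this

lemma IsDiagPair.contN_succ {j : ℕ} (hd : IsDiagPair pos j) :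
    contN pos (j + 1) = -contN pos j := by
  obtain ⟨hj, hpair⟩ := hd
  rw [contN_eq_cellContent pos hj, contN_eq_cellContent pos (by omega), hpair, conjPos,
    cellContent_swap]

lemma IsDiagPair.not_succ (hinj : Function.Injective pos) {j : ℕ} (hd : IsDiagPair pos j) :
    ¬IsDiagPair pos (j + 1) := by
  rintro ⟨hj1, hpair1⟩
  obtain ⟨hj, hpair⟩ := hd
  have : pos ⟨j + 2, hj1⟩ = pos ⟨j, by omega⟩ := by
    rw [hpair1]
    simp [conjPos, hpair]
  simpa using hinj this


lemma IsTransposable.mem_of_isDiagPair {l : List ℕ}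
    (htr : IsTransposable (l.map (sTr n)).prod pos) (hinj : Function.Injective pos) {j : ℕ}
    (hd : IsDiagPair pos j) : j ∈ l := by
  by_contra hj
  obtain ⟨hjn, hpair⟩ := hd
  exact not_sameCycle_prod_sTr hj hjn
    (htr _ _ (fun h => IsDiagPair.not_onDiag hinj ⟨hjn, hpair⟩ ⟨_, h⟩) hpair).2

lemma IsTransposable.onDiag_or_isDiagPair {μ : YoungDiagram} {w : Equiv.Perm (Fin n)}
    {t u : StdTab μ n} (htr : IsTransposable w t.val) (hμ : μ.card = n)
    (hu : u.val = conjPos t.val) (k : Fin n) :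
    (t.val k).1 = (t.val k).2 ∨ IsDiagPair t.val k ∨ IsDiagPair t.val (k - 1) := by
  by_cases hdiag : (t.val k).1 = (t.val k).2
  · exact .inl hdiag
  obtain ⟨m, hm⟩ := t.prop.exists_apply_eq hμ (hu ▸ u.prop.2.1 k)
  rcases (htr k m hdiag hm).1 with hmk | hkm
  · have hkn : (k : ℕ) + 1 < n := hmk ▸ m.isLt
    obtain rfl : m = ⟨k + 1, hkn⟩ := Fin.ext hmk
    exact .inr (.inl ⟨_, hm⟩)
  · refine .inr (.inr ⟨by omega, ?_⟩)
    have hk : (⟨k - 1 + 1, by omega⟩ : Fin n) = k := Fin.ext (by simp; omega)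
    have hm' : (⟨k - 1, by omega⟩ : Fin n) = m := Fin.ext (by simp; omega)
    rw [hk, hm']
    simp [conjPos, hm]

end DiagPairs

section Gamma

variable {F : Type*} [Field F] (q sqm1 : F) (sq : ℕ → F) {n : ℕ} {pos : Fin n → ℕ × ℕ}

/-- On the diagonal the content vanishes, so both `−1/[ρ]` cases of `γ` share one formula. -/
lemma gam_eq_of_not_isDiagPair {i : ℕ} (hi : i < n)
    (hcover : (pos ⟨i, hi⟩).1 = (pos ⟨i, hi⟩).2 ∨ IsDiagPair pos i ∨ IsDiagPair pos (i - 1))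
    (hd : ¬IsDiagPair pos i) :
    gam q sqm1 sq pos i = -(qint q (-contN pos i - contN pos (i + 1)))⁻¹ := by
  have h : onDiag pos i ∨ contN pos i = -contN pos (i - 1) := by
    rcases hcover with hdiag | hd' | hd'
    · exact .inl ⟨hi, hdiag⟩
    · exact absurd hd' hd
    · rcases Nat.eq_zero_or_pos i with rfl | hpos
      · exact absurd hd' hd
      · have hcont := hd'.contN_succ
        rw [Nat.sub_add_cancel hpos] at hcont
        exact .inr hcont
  unfold gam
  split_ifs with hon hc
  · obtain ⟨_, hdiag⟩ := hon
    rw [contN_eq_cellContent pos hi, cellContent, hdiag, sub_self, neg_zero]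
  · rw [hc, neg_neg]
  · exact absurd (h.resolve_left hon) hc

lemma IsStdTab.gam_eq_alph_of_isDiagPair {μ : YoungDiagram} (h : IsStdTab μ pos)
    (hμ : μ.card = n) {i : ℕ} (hd : IsDiagPair pos i) :
    gam q sqm1 sq pos i = alph q sqm1 sq (contN pos i - contN pos (i + 1)) := by
  have hnd := hd.not_onDiag h.1
  have hsucc := hd.contN_succ
  obtain ⟨hi, -⟩ := hd
  rw [gam, if_neg hnd, if_neg]
  rcases Nat.eq_zero_or_pos i with rfl | hpos
  · rw [contN_eq_cellContent pos (by omega), cellContent]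
    intro h0
    exact hnd ⟨_, by omega⟩
  · intro hc
    refine h.cellContent_ne_of_add_two hμ (a := ⟨i - 1, by omega⟩) (b := ⟨i + 1, hi⟩)
      (by simp; omega) ?_
    rw [← contN_eq_cellContent, ← contN_eq_cellContent, hsucc, hc, neg_neg]

end Gamma

section PartialConj

variable {n : ℕ} {pos : Fin n → ℕ × ℕ}

def InPairOf (pos : Fin n → ℕ × ℕ) (l : List ℕ) (k : ℕ) : Prop :=
  ∃ j ∈ l, IsDiagPair pos j ∧ (k = j ∨ k = j + 1)

/-- The tableau met on the way from `t` to `t'` just before the letters of `l` act: the diagonal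
pairs still to be swapped keep their place in `t`, every other entry already sits as in `t'`. -/
def partialConj (pos : Fin n → ℕ × ℕ) (l : List ℕ) : Fin n → ℕ × ℕ :=
  fun k => if InPairOf pos l k then pos k else conjPos pos k

lemma inPairOf_cons {i : ℕ} {r : List ℕ} {k : ℕ} :
    InPairOf pos (i :: r) k ↔ (IsDiagPair pos i ∧ (k = i ∨ k = i + 1)) ∨ InPairOf pos r k := by
  simp [InPairOf]

lemma not_inPairOf_of_le {r : List ℕ} {i k : ℕ} (hr : ∀ j ∈ r, i < j) (hk : k ≤ i) :
    ¬InPairOf pos r k := by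
  rintro ⟨j, hj, -, hkj⟩
  have := hr j hj
  omega

lemma partialConj_cons_of_not_isDiagPair {i : ℕ} {r : List ℕ} (hd : ¬IsDiagPair pos i) :
    partialConj pos (i :: r) = partialConj pos r := by
  funext k
  simp [partialConj, inPairOf_cons, hd]

lemma partialConj_cons_apply_of_not_isDiagPair {i : ℕ} {r : List ℕ} (hr : ∀ j ∈ r, i < j)
    (hd : ¬IsDiagPair pos i) (hi : i < n) :
    partialConj pos (i :: r) ⟨i, hi⟩ = conjPos pos ⟨i, hi⟩ := by
  rw [partialConj, if_neg]
  rw [inPairOf_cons]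
  rintro (⟨hd', -⟩ | hin)
  exacts [hd hd', not_inPairOf_of_le hr le_rfl hin]

lemma partialConj_cons_apply_succ {i : ℕ} {r : List ℕ} (hi : i + 1 < n)
    (hcover : (pos ⟨i + 1, hi⟩).1 = (pos ⟨i + 1, hi⟩).2 ∨ IsDiagPair pos (i + 1) ∨
      IsDiagPair pos i)
    (hpairs : ∀ j, IsDiagPair pos j → j ∈ i :: r ∨ ∀ m ∈ i :: r, j < m) :
    partialConj pos (i :: r) ⟨i + 1, hi⟩ = pos ⟨i + 1, hi⟩ := by
  rw [partialConj, ite_eq_left_iff]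
  intro hk
  rcases hcover with hdiag | hd | hd
  · exact Prod.ext hdiag.symm hdiag
  · rcases hpairs _ hd with hmem | hlt
    · exact absurd ⟨i + 1, hmem, hd, .inl rfl⟩ hk
    · exact absurd (hlt i (by simp)) (by simp)
  · exact absurd ⟨i, by simp, hd, .inr rfl⟩ hk

lemma swapEnt_partialConj_cons (hinj : Function.Injective pos) {i : ℕ} {r : List ℕ}
    (hi : i + 1 < n) (hr : ∀ j ∈ r, i < j) (hd : IsDiagPair pos i) :
    swapEnt (partialConj pos (i :: r)) i hi = partialConj pos r := by
  have hpair : pos ⟨i + 1, hi⟩ = conjPos pos ⟨i, by omega⟩ := hd.2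
  funext k
  simp only [swapEnt, Function.comp_apply, Equiv.swap_apply_def]
  split_ifs with hki hki1
  · subst hki
    rw [partialConj, if_pos (inPairOf_cons.2 (.inl ⟨hd, .inr rfl⟩)), partialConj,
      if_neg (not_inPairOf_of_le hr le_rfl), hpair]
  · subst hki1
    rw [partialConj, if_pos (inPairOf_cons.2 (.inl ⟨hd, .inl rfl⟩)), partialConj,
      if_neg]
    · simp [conjPos, hpair]
    rintro ⟨j, hj, hdj, hkj | hkj⟩
    · exact hd.not_succ hinj (by simpa [← hkj] using hdj)
    · have := hr j hj
      simp at hkj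
      omega
  · have hk : ¬(IsDiagPair pos i ∧ ((k : ℕ) = i ∨ (k : ℕ) = i + 1)) := by
      simp only [Fin.ext_iff] at hki hki1
      omega
    simp only [partialConj, inPairOf_cons, hk, false_or]

lemma partialConj_eq_self {l : List ℕ}
    (hcover : ∀ k : Fin n, (pos k).1 = (pos k).2 ∨ IsDiagPair pos k ∨ IsDiagPair pos (k - 1))
    (hpairs : ∀ j, IsDiagPair pos j → j ∈ l) : partialConj pos l = pos := by
  funext k
  rw [partialConj, ite_eq_left_iff]
  intro hk
  rcases hcover k with hdiag | hd | hd
  · exact Prod.ext hdiag.symm hdiag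
  · exact absurd ⟨k, hpairs _ hd, hd, .inl rfl⟩ hk
  · exact absurd ⟨k - 1, hpairs _ hd, hd, by omega⟩ hk

end PartialConj

section Factorization

variable {F : Type*} [Field F] (q sqm1 : F) (sq : ℕ → F) {μ : YoungDiagram} {n : ℕ}

/-- After the letter `i` the entry `i` never moves again, so at each letter only one branch of the
seminormal action can still reach `t'`: swap a diagonal pair, keep anything else. -/
lemma wordCoeff_partialConj_eq_prod_gam {t u : StdTab μ n} (hμ : μ.card = n)
    (hu : u.val = conjPos t.val)
    (hcover : ∀ k : Fin n,
      (t.val k).1 = (t.val k).2 ∨ IsDiagPair t.val k ∨ IsDiagPair t.val (k - 1))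
    {l : List ℕ} (hl : l.Pairwise (· < ·)) (hval : ∀ i ∈ l, i + 1 < n)
    (hpairs : ∀ j, IsDiagPair t.val j → j ∈ l ∨ ∀ m ∈ l, j < m)
    (s : StdTab μ n) (hs : s.val = partialConj t.val l) :
    wordCoeff q sqm1 sq u l s = (l.map (gam q sqm1 sq t.val)).prod := by
  induction l generalizing s with
  | nil =>
    have hsu : s = u := Subtype.ext (hs.trans (by funext k; simp [partialConj, InPairOf, hu]))
    simp [wordCoeff, hsu]
  | cons i r ih =>
    rw [List.pairwise_cons] at hl
    have hi := hval i (by simp)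
    have hpairs' : ∀ j, IsDiagPair t.val j → j ∈ r ∨ ∀ m ∈ r, j < m := by
      intro j hj
      rcases hpairs j hj with hmem | hlt
      · rcases List.mem_cons.1 hmem with rfl | hmem
        exacts [.inr hl.1, .inl hmem]
      · exact .inr fun m hm => hlt m (by simp [hm])
    have ih' := ih hl.2 (fun j hj => hval j (by simp [hj])) hpairs'
    have hsucc : s.val ⟨i + 1, hi⟩ = t.val ⟨i + 1, hi⟩ := by
      rw [hs]
      exact partialConj_cons_apply_succ hi (by simpa using hcover ⟨i + 1, hi⟩) hpairs
    rw [List.map_cons, List.prod_cons]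
    by_cases hd : IsDiagPair t.val i
    · have hcur : s.val ⟨i, by omega⟩ = t.val ⟨i, by omega⟩ := by
        rw [hs, partialConj, if_pos (inPairOf_cons.2 (.inl ⟨hd, .inl rfl⟩))]
      have hstd : IsStdTab μ (swapEnt s.val i hi) := by
        refine s.prop.swapEnt hi ?_
        rw [hcur, hsucc, hd.2]
        exact fun hle => hd.not_onDiag t.prop.1 ⟨_, le_antisymm hle.1 hle.2⟩
      rw [wordCoeff_cons_of_apply_succ_eq q sqm1 sq hi hl.1 (by rw [hsucc, hu, hd.2]) hstd,
        ih' (⟨swapEnt s.val i hi, hstd⟩ : StdTab μ n)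
          (by simp only [hs]; exact swapEnt_partialConj_cons t.prop.1 hi hl.1 hd),
        t.prop.gam_eq_alph_of_isDiagPair q sqm1 sq hμ hd, rhoAx_eq_cellContent, hcur, hsucc,
        contN_eq_cellContent _ (by omega), contN_eq_cellContent _ hi]
    · have hcur : s.val ⟨i, by omega⟩ = u.val ⟨i, by omega⟩ := by
        rw [hs, hu]
        exact partialConj_cons_apply_of_not_isDiagPair hl.1 hd _
      rw [wordCoeff_cons_of_apply_eq q sqm1 sq hi hl.1 hcur,
        ih' s (hs.trans (partialConj_cons_of_not_isDiagPair hd)),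
        gam_eq_of_not_isDiagPair q sqm1 sq (by omega) (hcover ⟨i, by omega⟩) hd,
        rhoAx_eq_cellContent, hcur, hsucc, hu, conjPos, cellContent_swap,
        contN_eq_cellContent _ (by omega), contN_eq_cellContent _ hi]

end Factorization

theorem gamma_factorization_general
    {F : Type*} [Field F] (q : F) (n : ℕ)
    -- the chosen square roots √(−1) and √([k]) in F
    (sqm1 : F)
    (sq : ℕ → F)
    {H : Type*} [Ring H] [Algebra F H]
    -- the Iwahori–Hecke algebra of type A with its basis of standard elements T_w
    (T : Equiv.Perm (Fin n) → H)
    (hT1 : T 1 = 1)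
    (hmul1 : ∀ (w : Equiv.Perm (Fin n)) (i : ℕ), i + 1 < n →
      len n (w * sTr n i) = len n w + 1 → T w * T (sTr n i) = T (w * sTr n i))
    -- the seminormal Specht module S(λ) for a self-conjugate λ
    (μ : YoungDiagram) (hμ : μ.card = n) (hself : μ.transpose = μ)
    (act : H →ₗ[F] Module.End F (StdTab μ n → F))
    (hact : SpechtRep q sqm1 sq n T μ act)
    -- w = s_{i₁}⋯s_{i_k} reduced with increasing indices (here 0-indexed: the list
    -- `il` lists the indices `i₁ − 1 < ⋯ < i_k − 1`)
    (il : List ℕ) (hil : il.Chain' (· < ·)) (hiln : ∀ i ∈ il, i + 1 < n)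
    (w : Equiv.Perm (Fin n)) (hw : w = (il.map (sTr n)).prod)
    (hred : len n w = il.length)
    (t : StdTab μ n) :
    act (T w) (Pi.single t (1 : F) : StdTab μ n → F) (selfConjTab hself t)
      = if IsTransposable w t.val then (il.map (gam q sqm1 sq t.val)).prod
        else 0 := by
  subst hw
  have hpw : il.Pairwise (· < ·) := List.isChain_iff_pairwise.1 hil
  have hu : (selfConjTab hself t).val = conjPos t.val := rfl
  rw [T_prod_of_reduced T hT1 hmul1 hiln hred, hact.act_prod_single_apply q sqm1 sq hiln]
  split_ifs with htr
  · have hpairs : ∀ j, IsDiagPair t.val j → j ∈ il :=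
      fun j hj => htr.mem_of_isDiagPair t.prop.1 hj
    have hcover := htr.onDiag_or_isDiagPair hμ hu
    exact wordCoeff_partialConj_eq_prod_gam q sqm1 sq hμ hu hcover hpw hiln
      (fun j hj => .inl (hpairs j hj)) t (partialConj_eq_self hcover hpairs).symm
  · by_contra hne
    exact htr (isTransposable_of_wordCoeff_ne_zero q sqm1 sq hu hpw hiln hne)

/-- Proposition `factorization`: if `w = s_{i₁}⋯s_{i_k}` is reduced,
with `1 ≤ i₁ < ⋯ < i_k < n`, and `t` is a standard `λ`-tableau then the coefficient
`γ_t(w)` of `v_{t'}` in `v_t T_w` is `γ_t(i₁)⋯γ_t(i_k)` if `t` is `w`-transposable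
and is `0` otherwise. -/
theorem gamma_factorization
    {F : Type*} [Field F] (q : F) (hq0 : q ≠ 0) (hq1 : q ≠ 1) (n : ℕ)
    (hqint : ∀ k : ℕ, 1 ≤ k → k ≤ n → qint q (k : ℤ) ≠ 0)
    -- the chosen square roots √(−1) and √([k]) in F
    (sqm1 : F) (hsqm1 : sqm1 ^ 2 = -1)
    (sq : ℕ → F) (hsq0 : sq 0 = 0)
    (hsq : ∀ k : ℕ, 1 ≤ k → k ≤ n → sq k ^ 2 = qint q (k : ℤ))
    {H : Type*} [Ring H] [Algebra F H]
    -- the Iwahori–Hecke algebra of type A with its basis of standard elements T_w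
    (T : Equiv.Perm (Fin n) → H)
    (bT : Module.Basis (Equiv.Perm (Fin n)) F H) (hbT : ∀ w, bT w = T w)
    (hT1 : T 1 = 1)
    (hTunit : ∀ w, IsUnit (T w))
    (hmul1 : ∀ (w : Equiv.Perm (Fin n)) (i : ℕ), i + 1 < n →
      len n (w * sTr n i) = len n w + 1 → T w * T (sTr n i) = T (w * sTr n i))
    (hmul2 : ∀ (w : Equiv.Perm (Fin n)) (i : ℕ), i + 1 < n →
      len n (w * sTr n i) + 1 = len n w →
      T w * T (sTr n i) = T (w * sTr n i) + (q - q⁻¹) • T w)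
    -- the hash involution
    (hash : H ≃ₐ[F] H)
    (hhash : ∀ w, hash (T w) = ((-1 : F) ^ len n w) • Ring.inverse (T w⁻¹))
    -- the seminormal Specht module S(λ) for a self-conjugate λ
    (μ : YoungDiagram) (hμ : μ.card = n) (hself : μ.transpose = μ)
    (act : H →ₗ[F] Module.End F (StdTab μ n → F))
    (hact : SpechtRep q sqm1 sq n T μ act)
    -- w = s_{i₁}⋯s_{i_k} reduced with increasing indices (here 0-indexed: the list
    -- `il` lists the indices `i₁ − 1 < ⋯ < i_k − 1`)
    (il : List ℕ) (hil : il.Chain' (· < ·)) (hiln : ∀ i ∈ il, i + 1 < n)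
    (w : Equiv.Perm (Fin n)) (hw : w = (il.map (sTr n)).prod)
    (hred : len n w = il.length)
    (t : StdTab μ n) :
    act (T w) (Pi.single t (1 : F) : StdTab μ n → F) (selfConjTab hself t)
      = if IsTransposable w t.val then (il.map (gam q sqm1 sq t.val)).prod
        else 0 :=
  gamma_factorization_general q n sqm1 sq T hT1 hmul1 μ hμ hself act hact il hil hiln w hw hred t

end
end

section
/- Let λ be a self-conjugate partition of n and κ a composition of n with ℓ(κ) = d(λ) parts. Then κ symmetrically covers λ if and only if the weakly decreasing rearrangement of κ equals h(λ); moreover, when this holds, the symmetric covering of λ of type κ is unique. -/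
open scoped Classical

noncomputable section

/-- The length `d(λ)` of the diagonal of the diagram of `λ`. -/
def ddiag (μ : YoungDiagram) : ℕ := (μ.cells.filter fun x => x.1 = x.2).card

/-- The diagonal hook lengths `h(λ) = (h₁,…,h_{d(λ)})`, with `hᵢ = λᵢ + λ'ᵢ − 2i + 1`. -/
def hooks (μ : YoungDiagram) : List ℕ :=
  (List.range (ddiag μ)).map fun i => μ.rowLen i + μ.colLen i - (2 * i + 1)

/-- `Λ` is a symmetric covering of `μ` of type `κ`: a chain of self-conjugate partitions
`∅ = Λ₀ ⊂ Λ₁ ⊂ ⋯ ⊂ Λ_d = μ` such that each `Λ_z/Λ_{z−1}` is a strip (its multiset of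
contents consists of distinct consecutive integers) and `|Λ_z| = κ₁ + ⋯ + κ_z`. -/
def IsSymCover (μ : YoungDiagram) (κ : List ℕ) (Λ : ℕ → YoungDiagram) : Prop :=
  (Λ 0).cells = ∅ ∧ Λ κ.length = μ ∧
    ∀ z < κ.length,
      (Λ z).cells ⊆ (Λ (z + 1)).cells ∧
      (Λ (z + 1)).transpose = Λ (z + 1) ∧
      (Λ (z + 1)).card = (κ.take (z + 1)).sum ∧
      (∃ a : ℤ,
        (((Λ (z + 1)).cells \ (Λ z).cells).val.map fun x => ((x.2 : ℤ) - (x.1 : ℤ)))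
          = (Multiset.range (((Λ (z + 1)).cells \ (Λ z).cells).card)).map
              fun j => a + (j : ℤ))

/-! A Young diagram is determined by its multiset of contents `c - r`, and a self-conjugate
diagram with diagonal arms `a₁ > ⋯ > a_d` has contents `⋃ᵢ [-aᵢ, aᵢ]`. A strip between two
self-conjugate diagrams has contents symmetric about `0`, so it is an interval `[-t, t]` with
`2t + 1` cells. Along a symmetric covering of type `κ` the contents of `λ^{(z)}` are therefore
`⋃_{i ≤ z} [-κᵢ/2, κᵢ/2]`: comparing multiplicities of each content `k ≥ 0` at `z = d` gives
`{κᵢ/2} = {aᵢ}`, i.e. `κ` is a rearrangement of `h(λ)`, and the same formula shows that the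
covering is determined by `κ`. Conversely, the Frobenius diagrams `(A | A)` of the initial
segments `A` of `(κ₁/2, …, κ_d/2)` form a covering. -/

def contents (s : Finset (ℕ × ℕ)) : Multiset ℤ := s.val.map fun x => (x.2 : ℤ) - x.1

lemma card_contents (s : Finset (ℕ × ℕ)) : (contents s).card = s.card :=
  Multiset.card_map _ _

lemma eq_empty_of_contents_eq_zero {s : Finset (ℕ × ℕ)} (h : contents s = 0) : s = ∅ :=
  Finset.val_eq_zero.mp (Multiset.map_eq_zero.mp h)

lemma contents_eq_add_contents_sdiff {s t : Finset (ℕ × ℕ)} (h : s ⊆ t) :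
    contents t = contents s + contents (t \ s) := by
  rw [contents, contents, contents, ← Multiset.map_add, ← Finset.disjUnion_val _ _
    Finset.disjoint_sdiff, Finset.disjUnion_eq_union, Finset.union_sdiff_of_subset h]

lemma contents_transpose (D : YoungDiagram) :
    contents D.transpose.cells = (contents D.cells).map Neg.neg := by
  simp only [contents, YoungDiagram.transpose, Equiv.finsetCongr_apply, Finset.map_val,
    Multiset.map_map]
  congr 1
  funext x
  simp

lemma count_neg_of_map_neg_eq {M : Multiset ℤ} (hM : M.map Neg.neg = M) (k : ℤ) :
    M.count (-k) = M.count k := by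
  conv_lhs => rw [← hM]
  exact Multiset.count_map_eq_count' _ _ neg_injective k

lemma lt_card_filter_iff_of_antitone {p : ℕ → Prop} [DecidablePred p] (hp : Antitone p)
    {s : Finset ℕ} (hs : ∀ r, p r → r ∈ s) (r : ℕ) : r < (s.filter p).card ↔ p r := by
  constructor
  · intro hr
    by_contra hpr
    have hsub : s.filter p ⊆ Finset.range r := fun x hx =>
      Finset.mem_range.2 (lt_of_not_ge fun hrx => hpr (hp hrx (Finset.mem_filter.1 hx).2))
    have := Finset.card_le_card hsub
    rw [Finset.card_range] at this
    omega
  · intro hpr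
    have hsub : Finset.range (r + 1) ⊆ s.filter p := fun x hx =>
      have hx : p x := hp (Nat.lt_succ_iff.mp (Finset.mem_range.mp hx)) hpr
      Finset.mem_filter.2 ⟨hs x hx, hx⟩
    simpa using Finset.card_le_card hsub

lemma mem_iff_lt_count_contents (D : YoungDiagram) (r k : ℕ) :
    (r, r + k) ∈ D ↔ r < (contents D.cells).count (k : ℤ) := by
  have hcount : (contents D.cells).count (k : ℤ)
      = ((D.cells.image Prod.fst).filter fun r => (r, r + k) ∈ D).card := by
    rw [contents, Multiset.count_map, ← Finset.filter_val, ← Finset.card_def]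
    refine Finset.card_nbij' Prod.fst (fun r => (r, r + k)) ?_ ?_ ?_ ?_ <;>
      intro x hx <;> simp only [Finset.coe_filter, Set.mem_ofPred_eq, YoungDiagram.mem_cells,
        Finset.mem_image] at hx ⊢
    · exact ⟨⟨x, hx.1, rfl⟩, by convert hx.1 using 2; omega⟩
    · exact ⟨hx.2, by push_cast; ring⟩
    · exact Prod.ext rfl (by omega)
  rw [hcount, lt_card_filter_iff_of_antitone]
  · exact fun a b hab hb => D.up_left_mem hab (by omega) hb
  · exact fun r hr => Finset.mem_image.2 ⟨_, hr, rfl⟩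

lemma YoungDiagram.eq_of_contents_eq {D E : YoungDiagram}
    (h : contents D.cells = contents E.cells) : D = E := by
  have hT : contents D.transpose.cells = contents E.transpose.cells := by
    rw [contents_transpose, contents_transpose, h]
  have key : ∀ {D E : YoungDiagram}, contents D.cells = contents E.cells →
      ∀ r k : ℕ, (r, r + k) ∈ D ↔ (r, r + k) ∈ E := fun h r k => by
    rw [mem_iff_lt_count_contents, mem_iff_lt_count_contents, h]
  ext ⟨r, c⟩
  rcases le_total r c with hrc | hcr
  · obtain ⟨k, rfl⟩ := Nat.exists_eq_add_of_le hrc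
    exact key h r k
  · obtain ⟨k, rfl⟩ := Nat.exists_eq_add_of_le hcr
    simpa only [YoungDiagram.mem_cells, YoungDiagram.mem_transpose, Prod.swap_prod_mk] using
      key hT c k

lemma contents_eq_of_mem_iff {D : YoungDiagram} (hD : D.transpose = D) {M : Multiset ℤ}
    (hM : M.map Neg.neg = M) (h : ∀ r k : ℕ, (r, r + k) ∈ D ↔ r < M.count (k : ℤ)) :
    contents D.cells = M := by
  have hpos : ∀ k : ℕ, (contents D.cells).count (k : ℤ) = M.count (k : ℤ) := fun k =>
    eq_of_forall_lt_iff fun r => by rw [← mem_iff_lt_count_contents, h]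
  have hDneg : (contents D.cells).map Neg.neg = contents D.cells := by
    rw [← contents_transpose, hD]
  ext k
  rcases Int.eq_nat_or_neg k with ⟨n, rfl | rfl⟩
  · exact hpos n
  · rw [count_neg_of_map_neg_eq hDneg, count_neg_of_map_neg_eq hM, hpos]

def hookContents (t : ℕ) : Multiset ℤ := (Finset.Icc (-(t : ℤ)) t).val

lemma hookContents_eq_map_range (t : ℕ) :
    hookContents t = (Multiset.range (2 * t + 1)).map fun j : ℕ => -(t : ℤ) + j := by
  rw [hookContents, Int.Icc_eq_finset_map, Finset.map_val, Finset.range_val]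
  congr 2
  omega

lemma card_hookContents (t : ℕ) : (hookContents t).card = 2 * t + 1 := by
  rw [hookContents_eq_map_range, Multiset.card_map, Multiset.card_range]

lemma map_neg_bind_hookContents (T : Multiset ℕ) :
    (T.bind hookContents).map Neg.neg = T.bind hookContents := by
  rw [Multiset.map_bind]
  congr 1
  funext t
  refine (Multiset.Nodup.ext ((Finset.nodup _).map neg_injective) (Finset.nodup _)).2 fun k => ?_
  simp only [Multiset.mem_map, Finset.mem_val, Finset.mem_Icc]
  exact ⟨fun ⟨x, hx, hxk⟩ => by omega, fun hk => ⟨-k, by omega, neg_neg k⟩⟩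

lemma count_bind_hookContents (T : Multiset ℕ) (k : ℤ) :
    (T.bind hookContents).count k = T.countP fun t => k.natAbs ≤ t := by
  induction T using Multiset.induction_on with
  | empty => simp
  | cons t T ih =>
    rw [Multiset.cons_bind, Multiset.count_add, ih, Multiset.countP_cons, hookContents,
      Multiset.count_eq_of_nodup (Finset.nodup _), add_comm]
    simp only [Finset.mem_val, Finset.mem_Icc]
    congr 1
    split_ifs <;> omega

lemma countP_le_eq_count_add_countP_lt (s : Multiset ℕ) (v : ℕ) :
    s.countP (v ≤ ·) = s.count v + s.countP (v < ·) := by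
  induction s using Multiset.induction_on with
  | empty => simp
  | cons a s ih =>
    simp only [Multiset.countP_cons, Multiset.count_cons, ih]
    split_ifs <;> omega

lemma bind_hookContents_injective :
    Function.Injective fun T : Multiset ℕ => T.bind hookContents := by
  intro T T' h
  have hge : ∀ v : ℕ, T.countP (v ≤ ·) = T'.countP (v ≤ ·) := fun v => by
    simpa only [count_bind_hookContents, Int.natAbs_natCast] using
      congrArg (Multiset.count (v : ℤ)) h
  ext v
  have h1 := countP_le_eq_count_add_countP_lt T v
  have h2 := countP_le_eq_count_add_countP_lt T' v
  have h3 := hge v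
  have h4 := hge (v + 1)
  simp only [Nat.succ_le_iff] at h4
  omega

-- An interval of integers that is symmetric about `0` is some `[-t, t]`.
lemma map_range_add_eq_hookContents {a : ℤ} {m : ℕ} (hm : 0 < m)
    (h : ((Multiset.range m).map fun j : ℕ => a + j).map Neg.neg
      = (Multiset.range m).map fun j : ℕ => a + j) :
    m = 2 * (m / 2) + 1 ∧ (Multiset.range m).map (fun j : ℕ => a + j) = hookContents (m / 2) := by
  have hmem : ∀ x : ℤ, x ∈ (Multiset.range m).map (fun j : ℕ => a + j) ↔ a ≤ x ∧ x < a + m :=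
    fun x => by
      simp only [Multiset.mem_map, Multiset.mem_range]
      exact ⟨fun ⟨j, hj, hjx⟩ => by omega, fun hx => ⟨(x - a).toNat, by omega, by omega⟩⟩
  have hneg : ∀ x, a ≤ x ∧ x < a + m → a ≤ -x ∧ -x < a + m := fun x hx => by
    rw [← hmem, ← h]
    exact Multiset.mem_map_of_mem _ ((hmem x).2 hx)
  have h1 := hneg a (by omega)
  have h2 := hneg (a + m - 1) (by omega)
  have hodd : m = 2 * (m / 2) + 1 := by omega
  refine ⟨hodd, ?_⟩
  rw [hookContents_eq_map_range, ← hodd, show a = -((m / 2 : ℕ) : ℤ) by omega]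

lemma contents_eq_add_hookContents_of_strip {D D' : YoungDiagram}
    (hD : D.transpose = D) (hD' : D'.transpose = D') (hsub : D.cells ⊆ D'.cells)
    {m : ℕ} (hm : 0 < m) {a : ℤ} (hstrip : contents (D'.cells \ D.cells) = (Multiset.range m).map fun j : ℕ => a + j) :
    m = 2 * (m / 2) + 1 ∧ contents D'.cells = contents D.cells + hookContents (m / 2) := by
  have hsplit := contents_eq_add_contents_sdiff hsub
  have hsym : (contents (D'.cells \ D.cells)).map Neg.neg = contents (D'.cells \ D.cells) := by
    have := congrArg (Multiset.map Neg.neg) hsplit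
    rwa [Multiset.map_add, ← contents_transpose, ← contents_transpose, hD, hD', hsplit,
      add_right_inj, eq_comm] at this
  rw [hstrip] at hsym
  obtain ⟨hodd, hhook⟩ := map_range_add_eq_hookContents hm hsym
  exact ⟨hodd, by rw [hsplit, hstrip, hhook]⟩

-- The strip condition of `IsSymCover` casts `Multiset.range` to `Multiset ℤ` by a monadic bind.
lemma map_range_lift (a : ℤ) (m : ℕ) :
    ((Multiset.range m).map fun j => a + (j : ℤ)) = (Multiset.range m).map fun j : ℕ => a + j := by
  simp [Multiset.map_map]

namespace IsSymCover

variable {μ : YoungDiagram} {κ : List ℕ} {Λ : ℕ → YoungDiagram}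

lemma transpose_eq (hc : IsSymCover μ κ Λ) {z : ℕ} (hz : z ≤ κ.length) :
    (Λ z).transpose = Λ z := by
  rcases z with _ | z
  · apply YoungDiagram.eq_of_contents_eq
    rw [contents_transpose, hc.1, contents, Finset.empty_val, Multiset.map_zero,
      Multiset.map_zero]
  · exact (hc.2.2 z hz).2.1

lemma card_sdiff (hc : IsSymCover μ κ Λ) {z : ℕ} (hz : z < κ.length) :
    ((Λ (z + 1)).cells \ (Λ z).cells).card = κ[z] := by
  have hcard : ∀ y ≤ κ.length, (Λ y).card = (κ.take y).sum := fun y hy => by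
    rcases y with _ | y
    · simp [YoungDiagram.card, hc.1]
    · exact (hc.2.2 y hy).2.2.1
  have h := Finset.card_sdiff_add_card_eq_card (hc.2.2 z hz).1
  have h1 := hcard z hz.le
  have h2 := hcard (z + 1) hz
  rw [List.sum_take_succ _ _ hz] at h2
  simp only [YoungDiagram.card] at h1 h2
  omega

lemma contents_succ (hc : IsSymCover μ κ Λ) (hκ : ∀ k ∈ κ, 0 < k) {z : ℕ} (hz : z < κ.length) :
    κ[z] = 2 * (κ[z] / 2) + 1 ∧
      contents (Λ (z + 1)).cells = contents (Λ z).cells + hookContents (κ[z] / 2) := by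
  obtain ⟨hsub, hT, -, a, hstrip⟩ := hc.2.2 z hz
  rw [card_sdiff hc hz, map_range_lift] at hstrip
  exact contents_eq_add_hookContents_of_strip (transpose_eq hc hz.le) hT hsub
    (hκ _ (List.getElem_mem hz)) hstrip

lemma odd_of_mem (hc : IsSymCover μ κ Λ) (hκ : ∀ k ∈ κ, 0 < k) {k : ℕ} (hk : k ∈ κ) :
    k = 2 * (k / 2) + 1 := by
  obtain ⟨z, hz, rfl⟩ := List.getElem_of_mem hk
  exact (contents_succ hc hκ hz).1

lemma contents_eq (hc : IsSymCover μ κ Λ) (hκ : ∀ k ∈ κ, 0 < k) {z : ℕ} (hz : z ≤ κ.length) :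
    contents (Λ z).cells = (↑((κ.take z).map (· / 2)) : Multiset ℕ).bind hookContents := by
  induction z with
  | zero => simp [hc.1, contents]
  | succ z ih =>
    rw [(contents_succ hc hκ hz).2, ih (by omega), List.take_succ_eq_append_getElem hz,
      List.map_append, ← Multiset.coe_add, Multiset.add_bind]
    simp

end IsSymCover

lemma card_filter_le_le_add (S : Finset ℕ) (u j : ℕ) :
    (S.filter (u ≤ ·)).card ≤ (S.filter (u + j ≤ ·)).card + j := by
  have hsub : S.filter (u ≤ ·) ⊆ S.filter (u + j ≤ ·) ∪ Finset.Ico u (u + j) := fun a ha => by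
    simp only [Finset.mem_filter, Finset.mem_union, Finset.mem_Ico] at ha ⊢
    by_cases h : u + j ≤ a
    · exact Or.inl ⟨ha.1, h⟩
    · exact Or.inr ⟨ha.2, by omega⟩
  refine (Finset.card_le_card hsub).trans ((Finset.card_union_le _ _).trans ?_)
  rw [Nat.card_Ico, Nat.add_sub_cancel_left]

/-- The self-conjugate diagram with Frobenius coordinates `(S | S)`: the cell `(r, c)` lies on the
`min r c`-th diagonal hook, at distance `max r c - min r c` from the diagonal. -/
def ofArms (S : Finset ℕ) : YoungDiagram where
  cells := (Finset.range (S.card + S.sup id) ×ˢ Finset.range (S.card + S.sup id)).filter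
    fun x => min x.1 x.2 < (S.filter (max x.1 x.2 - min x.1 x.2 ≤ ·)).card
  isLowerSet := by
    rintro ⟨r, c⟩ ⟨r', c'⟩ ⟨hr, hc⟩ hx
    simp only [Finset.coe_filter, Finset.mem_product, Finset.mem_range, Set.mem_ofPred_eq] at hx ⊢
    obtain ⟨⟨hrB, hcB⟩, hx⟩ := hx
    refine ⟨⟨by omega, by omega⟩, ?_⟩
    set u := max r c - min r c with hu_def
    set u' := max r' c' - min r' c' with hu'_def
    rcases le_total u' u with hu | hu
    · have : (S.filter (u ≤ ·)).card ≤ (S.filter (u' ≤ ·)).card :=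
        Finset.card_le_card fun a ha => by
          simp only [Finset.mem_filter] at ha ⊢
          exact ⟨ha.1, hu.trans ha.2⟩
      omega
    · have := card_filter_le_le_add S u (u' - u)
      rw [Nat.add_sub_cancel' hu] at this
      omega

lemma mem_ofArms {S : Finset ℕ} {x : ℕ × ℕ} :
    x ∈ ofArms S ↔ min x.1 x.2 < (S.filter (max x.1 x.2 - min x.1 x.2 ≤ ·)).card := by
  refine ⟨fun h => (Finset.mem_filter.1 h).2, fun h => Finset.mem_filter.2 ⟨?_, h⟩⟩
  set u := max x.1 x.2 - min x.1 x.2 with hu_def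
  obtain ⟨s, hs⟩ := Finset.card_pos.1 (by omega : 0 < (S.filter (u ≤ ·)).card)
  have hsup := Finset.le_sup (f := id) (Finset.mem_filter.1 hs).1
  have hcard := Finset.card_le_card (Finset.filter_subset (u ≤ ·) S)
  simp only [Finset.mem_filter, id] at hs hsup
  simp only [Finset.mem_product, Finset.mem_range]
  omega

lemma transpose_ofArms (S : Finset ℕ) : (ofArms S).transpose = ofArms S := by
  ext ⟨r, c⟩
  simp only [YoungDiagram.mem_cells, YoungDiagram.mem_transpose, mem_ofArms, Prod.swap_prod_mk,
    min_comm, max_comm]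

lemma ofArms_mono {S T : Finset ℕ} (h : S ⊆ T) : (ofArms S).cells ⊆ (ofArms T).cells :=
  fun x hx => by
    rw [YoungDiagram.mem_cells, mem_ofArms] at hx ⊢
    exact lt_of_lt_of_le hx (Finset.card_le_card (Finset.filter_subset_filter _ h))

lemma contents_ofArms (S : Finset ℕ) : contents (ofArms S).cells = S.val.bind hookContents := by
  refine contents_eq_of_mem_iff (transpose_ofArms S) (map_neg_bind_hookContents _) fun r k => ?_
  rw [mem_ofArms, count_bind_hookContents, Int.natAbs_natCast,
    Multiset.countP_eq_card_filter, ← Finset.filter_val, ← Finset.card_def]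
  simp only [le_add_iff_nonneg_right, zero_le, min_eq_left, max_eq_right, add_tsub_cancel_left]

lemma contents_ofArms_insert {S : Finset ℕ} {t : ℕ} (ht : t ∉ S) :
    contents (ofArms (insert t S)).cells = contents (ofArms S).cells + hookContents t := by
  rw [contents_ofArms, contents_ofArms, Finset.insert_val_of_notMem ht, Multiset.cons_bind,
    add_comm]

lemma card_ofArms (S : Finset ℕ) : (ofArms S).card = (S.val.map (2 * · + 1)).sum := by
  rw [YoungDiagram.card, ← card_contents, contents_ofArms, Multiset.card_bind]
  simp only [Function.comp_def, card_hookContents]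

lemma isSymCover_ofArms {A : List ℕ} (hA : A.Nodup) :
    IsSymCover (ofArms A.toFinset) (A.map (2 * · + 1)) fun z => ofArms (A.take z).toFinset := by
  have hval : ∀ z, (A.take z).toFinset.val = ↑(A.take z) := fun z => by
    rw [List.toFinset_val, (hA.sublist (List.take_sublist z A)).dedup]
  refine ⟨eq_empty_of_contents_eq_zero (by simp [contents_ofArms]), by simp, fun z hz => ?_⟩
  rw [List.length_map] at hz
  have hnot : A[z] ∉ (A.take z).toFinset := by
    rw [List.mem_toFinset]
    exact fun h => List.disjoint_of_nodup_append (List.take_succ_eq_append_getElem hz ▸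
      hA.sublist (List.take_sublist (z + 1) A)) h (List.mem_singleton_self _)
  have hins : (A.take (z + 1)).toFinset = insert A[z] (A.take z).toFinset := by
    rw [List.take_succ_eq_append_getElem hz, List.toFinset_append, Finset.union_comm]
    rfl
  have hsub := ofArms_mono (hins ▸ Finset.subset_insert A[z] (A.take z).toFinset)
  have hskew : contents ((ofArms (A.take (z + 1)).toFinset).cells
      \ (ofArms (A.take z).toFinset).cells) = hookContents A[z] := by
    have h := contents_eq_add_contents_sdiff hsub
    rw [hins] at h ⊢
    rw [contents_ofArms_insert hnot] at h
    exact (add_left_cancel h).symm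
  refine ⟨hsub, transpose_ofArms _, ?_, -(A[z] : ℤ), ?_⟩
  · rw [card_ofArms, hval, ← List.map_take, Multiset.map_coe, Multiset.sum_coe]
  · rw [map_range_lift, ← card_contents, hskew, card_hookContents, ← hookContents_eq_map_range]
    exact hskew

def arms (μ : YoungDiagram) : Multiset ℕ :=
  (Multiset.range (ddiag μ)).map fun i => μ.rowLen i - (i + 1)

lemma mem_diag_iff (μ : YoungDiagram) (r : ℕ) : (r, r) ∈ μ ↔ r < ddiag μ := by
  have h := mem_iff_lt_count_contents μ r 0
  rw [add_zero] at h
  rw [h, contents, Multiset.count_map, ddiag, Finset.card_def, Finset.filter_val,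
    Multiset.filter_congr fun x _ => show (0 : ℤ) = x.2 - x.1 ↔ x.1 = x.2 by omega]

lemma lt_rowLen_of_lt_ddiag (μ : YoungDiagram) {i : ℕ} (hi : i < ddiag μ) : i < μ.rowLen i :=
  YoungDiagram.mem_iff_lt_rowLen.1 ((mem_diag_iff μ i).2 hi)

lemma mem_iff_lt_countP_arms (μ : YoungDiagram) (r k : ℕ) :
    (r, r + k) ∈ μ ↔ r < (arms μ).countP (k ≤ ·) := by
  have hdiag : ∀ i, i + k < μ.rowLen i → i < ddiag μ := fun i hi =>
    (mem_diag_iff μ i).1 (YoungDiagram.mem_iff_lt_rowLen.2 (by omega))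
  have hfilter : (Finset.range (ddiag μ)).filter (fun i => k ≤ μ.rowLen i - (i + 1))
      = (Finset.range (ddiag μ)).filter fun i => i + k < μ.rowLen i :=
    Finset.filter_congr fun i hi => by
      have := lt_rowLen_of_lt_ddiag μ (Finset.mem_range.1 hi)
      omega
  rw [arms, Multiset.countP_map, ← Finset.range_val, ← Finset.filter_val, ← Finset.card_def,
    hfilter, lt_card_filter_iff_of_antitone, YoungDiagram.mem_iff_lt_rowLen]
  · exact fun a b hab hb => lt_of_le_of_lt (by omega) (hb.trans_le (μ.rowLen_anti a b hab))
  · exact fun i hi => Finset.mem_range.2 (hdiag i hi)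

lemma nodup_arms (μ : YoungDiagram) : (arms μ).Nodup := by
  refine (Multiset.nodup_range _).map_on fun i hi j hj hij => ?_
  have hi' := lt_rowLen_of_lt_ddiag μ (Multiset.mem_range.1 hi)
  have hj' := lt_rowLen_of_lt_ddiag μ (Multiset.mem_range.1 hj)
  rcases lt_trichotomy i j with h | h | h
  · have := μ.rowLen_anti i j h.le
    omega
  · exact h
  · have := μ.rowLen_anti j i h.le
    omega

lemma coe_hooks {μ : YoungDiagram} (hself : μ.transpose = μ) :
    (↑(hooks μ) : Multiset ℕ) = (arms μ).map (2 * · + 1) := by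
  rw [hooks, arms, ← Multiset.map_coe, Multiset.coe_range, Multiset.map_map]
  refine Multiset.map_congr rfl fun i hi => ?_
  have hcol : μ.colLen i = μ.rowLen i := by rw [← YoungDiagram.colLen_transpose, hself]
  have := lt_rowLen_of_lt_ddiag μ (Multiset.mem_range.1 hi)
  simp only [Function.comp_apply]
  omega

lemma contents_eq_bind_arms {μ : YoungDiagram} (hself : μ.transpose = μ) :
    contents μ.cells = (arms μ).bind hookContents :=
  contents_eq_of_mem_iff hself (map_neg_bind_hookContents _) fun r k => by
    rw [mem_iff_lt_countP_arms, count_bind_hookContents, Int.natAbs_natCast]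

lemma map_two_mul_add_one_map_div_two {κ : List ℕ} (h : ∀ k ∈ κ, k = 2 * (k / 2) + 1) :
    (κ.map (· / 2)).map (2 * · + 1) = κ := by
  rw [List.map_map]
  exact (List.map_congr_left fun k hk => (h k hk).symm).trans (List.map_id' κ)

lemma IsSymCover.coe_eq_hooks {μ : YoungDiagram} (hself : μ.transpose = μ) {κ : List ℕ}
    (hκ : ∀ k ∈ κ, 0 < k) {Λ : ℕ → YoungDiagram} (hc : IsSymCover μ κ Λ) :
    (↑κ : Multiset ℕ) = ↑(hooks μ) := by
  have hlast := hc.contents_eq hκ le_rfl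
  rw [List.take_length, hc.2.1, contents_eq_bind_arms hself] at hlast
  rw [← map_two_mul_add_one_map_div_two fun k hk => hc.odd_of_mem hκ hk, ← Multiset.map_coe,
    bind_hookContents_injective hlast.symm, coe_hooks hself]

lemma exists_isSymCover_of_coe_eq_hooks {μ : YoungDiagram} (hself : μ.transpose = μ)
    {κ : List ℕ} (hκ : (↑κ : Multiset ℕ) = ↑(hooks μ)) : ∃ Λ, IsSymCover μ κ Λ := by
  have hκA : (κ.map (· / 2)).map (2 * · + 1) = κ := map_two_mul_add_one_map_div_two fun k hk => by
    obtain ⟨a, -, rfl⟩ := Multiset.mem_map.1 (coe_hooks hself ▸ hκ ▸ Multiset.mem_coe.2 hk)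
    omega
  have hA : (↑(κ.map (· / 2)) : Multiset ℕ) = arms μ :=
    Multiset.map_injective (f := (2 * · + 1)) (fun a b h => by simpa using h)
      (by rw [Multiset.map_coe, hκA, hκ, coe_hooks hself])
  have hnodup : (κ.map (· / 2)).Nodup := by
    rw [← Multiset.coe_nodup, hA]
    exact nodup_arms μ
  have hμ : ofArms (κ.map (· / 2)).toFinset = μ := YoungDiagram.eq_of_contents_eq <| by
    rw [contents_ofArms, List.toFinset_val, hnodup.dedup, hA, contents_eq_bind_arms hself]
  exact ⟨_, hμ ▸ hκA ▸ isSymCover_ofArms hnodup⟩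

theorem symmetric_covering_iff_hooks_general
    (μ : YoungDiagram) (hself : μ.transpose = μ)
    (κ : List ℕ) (hκpos : ∀ k ∈ κ, 0 < k) :
    ((∃ Λ : ℕ → YoungDiagram, IsSymCover μ κ Λ)
        ↔ (↑κ : Multiset ℕ) = (↑(hooks μ) : Multiset ℕ)) ∧
      ((↑κ : Multiset ℕ) = (↑(hooks μ) : Multiset ℕ) →
        ∀ Λ Λ' : ℕ → YoungDiagram, IsSymCover μ κ Λ → IsSymCover μ κ Λ' →
          ∀ z ≤ κ.length, Λ z = Λ' z) :=
  ⟨⟨fun ⟨_, hc⟩ => hc.coe_eq_hooks hself hκpos, exists_isSymCover_of_coe_eq_hooks hself⟩,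
    fun _ _ _ hc hc' _ hz => YoungDiagram.eq_of_contents_eq <| by
      rw [hc.contents_eq hκpos hz, hc'.contents_eq hκpos hz]⟩

/-- Lemma `covers`: if `λ` is self-conjugate and `κ` is a composition
of `n` with `ℓ(κ) = d(λ)` parts, then `κ` symmetrically covers `λ` if and only if the
weakly decreasing rearrangement of `κ` equals `h(λ)`; moreover, in that case the
symmetric covering of `λ` of type `κ` is unique. -/
theorem symmetric_covering_iff_hooks
    (n : ℕ) (μ : YoungDiagram) (hμ : μ.card = n) (hself : μ.transpose = μ)
    (κ : List ℕ) (hκpos : ∀ k ∈ κ, 0 < k) (hκsum : κ.sum = n)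
    (hκlen : κ.length = ddiag μ) :
    ((∃ Λ : ℕ → YoungDiagram, IsSymCover μ κ Λ)
        ↔ (↑κ : Multiset ℕ) = (↑(hooks μ) : Multiset ℕ)) ∧
      ((↑κ : Multiset ℕ) = (↑(hooks μ) : Multiset ℕ) →
        ∀ Λ Λ' : ℕ → YoungDiagram, IsSymCover μ κ Λ → IsSymCover μ κ Λ' →
          ∀ z ≤ κ.length, Λ z = Λ' z) :=
  symmetric_covering_iff_hooks_general μ hself κ hκpos

end
end
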